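/- arXiv:1108.3113 — 2 statements merged into one kernel-verified Lean document; each statement's English description precedes it below -/
import Mathlib

section
/- Let α ∈ 𝕃 with Norm(α) ≡ 2 (mod 4). Then there is exactly one η ∈ {1+i, 1+j, 1+k} such that α = ηβ for some β ∈ 𝕃. -/
open scoped Quaternion

/-- The Lipschitz quaternion 1 + i. -/
def onePlusI : ℍ[ℤ] := ⟨1, 1, 0, 0⟩
/-- The Lipschitz quaternion 1 + j. -/
def onePlusJ : ℍ[ℤ] := ⟨1, 0, 1, 0⟩
/-- The Lipschitz quaternion 1 + k. -/
def onePlusK : ℍ[ℤ] := ⟨1, 0, 0, 1⟩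

/-!
Since `η * star η = star η * η = 2` for `η = 1 + u`, `u ∈ {i, j, k}`, the quaternion `η`
left-divides `α` exactly when `star η * α` is divisible by `2`, which is a parity condition on
the coordinates `(a, b, c, d)` of `α`: they must agree mod 2 in pairs, `{a, b}, {c, d}` for
`1 + i`, `{a, c}, {b, d}` for `1 + j` and `{a, d}, {b, c}` for `1 + k`. A square is congruent
to its parity mod 4, so `Norm(α) ≡ 2 (mod 4)` says that exactly two coordinates are odd, and
exactly one of the three pairings puts the two odd coordinates together.
-/

theorem Int.sq_emod_four_eq_emod_two (n : ℤ) : n ^ 2 % 4 = n % 2 := by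
  rcases Int.even_or_odd n with ⟨k, rfl⟩ | hodd
  · ring_nf
    omega
  · rw [Int.sq_mod_four_eq_one_of_odd hodd, Int.odd_iff.mp hodd]

theorem existsUnique_mem_triple {α : Type*} {x y z : α} {p : α → Prop}
    (h : p x ∧ ¬p y ∧ ¬p z ∨ ¬p x ∧ p y ∧ ¬p z ∨ ¬p x ∧ ¬p y ∧ p z) :
    ∃! a, a ∈ ({x, y, z} : Set α) ∧ p a := by
  rcases h with ⟨hx, hy, hz⟩ | ⟨hx, hy, hz⟩ | ⟨hx, hy, hz⟩
  · refine ⟨x, ⟨by simp, hx⟩, ?_⟩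
    rintro a ⟨rfl | rfl | rfl, ha⟩ <;> tauto
  · refine ⟨y, ⟨by simp, hy⟩, ?_⟩
    rintro a ⟨rfl | rfl | rfl, ha⟩ <;> tauto
  · refine ⟨z, ⟨by simp, hz⟩, ?_⟩
    rintro a ⟨rfl | rfl | rfl, ha⟩ <;> tauto

namespace Quaternion

theorem intCast_dvd_iff {n : ℤ} {q : ℍ[ℤ]} :
    (n : ℍ[ℤ]) ∣ q ↔ n ∣ q.re ∧ n ∣ q.imI ∧ n ∣ q.imJ ∧ n ∣ q.imK := by
  simp only [Dvd.dvd, ← zsmul_eq_mul]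
  constructor
  · rintro ⟨β, rfl⟩
    exact ⟨⟨_, rfl⟩, ⟨_, rfl⟩, ⟨_, rfl⟩, ⟨_, rfl⟩⟩
  · rintro ⟨⟨a, ha⟩, ⟨b, hb⟩, ⟨c, hc⟩, ⟨d, hd⟩⟩
    exact ⟨⟨a, b, c, d⟩, by ext <;> assumption⟩

theorem isLeftRegular_intCast {n : ℤ} (hn : n ≠ 0) : IsLeftRegular (n : ℍ[ℤ]) := by
  intro p q h
  simp only [← zsmul_eq_mul] at h
  exact smul_right_injective _ hn h

theorem dvd_iff_normSq_dvd_star_mul {η α : ℍ[ℤ]} (hη : normSq η ≠ 0) :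
    η ∣ α ↔ ((normSq η : ℤ) : ℍ[ℤ]) ∣ star η * α := by
  -- `star_mul_self` is stated with the coercion `R → ℍ[R]`, which is `Int.cast` only up to defeq.
  have h_star_mul : star η * η = ((normSq η : ℤ) : ℍ[ℤ]) := star_mul_self η
  have h_mul_star : η * star η = ((normSq η : ℤ) : ℍ[ℤ]) := self_mul_star η
  constructor
  · rintro ⟨β, rfl⟩
    exact ⟨β, by rw [← mul_assoc, h_star_mul]⟩
  · rintro ⟨β, hβ⟩
    refine ⟨β, isLeftRegular_intCast hη ?_⟩
    calc ((normSq η : ℤ) : ℍ[ℤ]) * α = η * (star η * α) := by rw [← mul_assoc, h_mul_star]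
      _ = ((normSq η : ℤ) : ℍ[ℤ]) * (η * β) := by
        rw [hβ, ← mul_assoc, ← mul_assoc, (Int.cast_commute _ η).eq]

end Quaternion

open Quaternion

theorem onePlusI_dvd_iff {α : ℍ[ℤ]} :
    onePlusI ∣ α ↔ α.re ≡ α.imI [ZMOD 2] ∧ α.imJ ≡ α.imK [ZMOD 2] := by
  have hη : normSq onePlusI = 2 := by rw [normSq_def']; rfl
  rw [dvd_iff_normSq_dvd_star_mul (hη ▸ two_ne_zero), hη, intCast_dvd_iff]
  simp only [re_mul, imI_mul, imJ_mul, imK_mul, re_star, imI_star, imJ_star, imK_star, Int.ModEq]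
  simp only [onePlusI]
  omega

theorem onePlusJ_dvd_iff {α : ℍ[ℤ]} :
    onePlusJ ∣ α ↔ α.re ≡ α.imJ [ZMOD 2] ∧ α.imI ≡ α.imK [ZMOD 2] := by
  have hη : normSq onePlusJ = 2 := by rw [normSq_def']; rfl
  rw [dvd_iff_normSq_dvd_star_mul (hη ▸ two_ne_zero), hη, intCast_dvd_iff]
  simp only [re_mul, imI_mul, imJ_mul, imK_mul, re_star, imI_star, imJ_star, imK_star, Int.ModEq]
  simp only [onePlusJ]
  omega

theorem onePlusK_dvd_iff {α : ℍ[ℤ]} :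
    onePlusK ∣ α ↔ α.re ≡ α.imK [ZMOD 2] ∧ α.imI ≡ α.imJ [ZMOD 2] := by
  have hη : normSq onePlusK = 2 := by rw [normSq_def']; rfl
  rw [dvd_iff_normSq_dvd_star_mul (hη ▸ two_ne_zero), hη, intCast_dvd_iff]
  simp only [re_mul, imI_mul, imJ_mul, imK_mul, re_star, imI_star, imJ_star, imK_star, Int.ModEq]
  simp only [onePlusK]
  omega

/-- If Norm(α) ≡ 2 (mod 4), then exactly one η ∈ {1+i, 1+j, 1+k}
left-divides α in 𝕃. -/
theorem lipschitz_norm_two_mod_four (α : ℍ[ℤ])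
    (h : Quaternion.normSq α % 4 = 2) :
    ∃! η : ℍ[ℤ], η ∈ ({onePlusI, onePlusJ, onePlusK} : Set ℍ[ℤ]) ∧
      ∃ β : ℍ[ℤ], α = η * β := by
  rw [normSq_def'] at h
  have h_re := Int.sq_emod_four_eq_emod_two α.re
  have h_imI := Int.sq_emod_four_eq_emod_two α.imI
  have h_imJ := Int.sq_emod_four_eq_emod_two α.imJ
  have h_imK := Int.sq_emod_four_eq_emod_two α.imK
  refine existsUnique_mem_triple ?_
  simp only [← dvd_def, onePlusI_dvd_iff, onePlusJ_dvd_iff, onePlusK_dvd_iff, Int.ModEq]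
  omega
end

section
/- Let α be a primary Lipschitz quaternion and ε a unit of the Hurwitz order 𝔼. Then εα ∈ 𝕃 (equivalently αε ∈ 𝕃) if and only if ε ∈ {±1, ±i, ±j, ±k}. -/
open scoped Quaternion

/-- Build a rational quaternion from four rationals. -/
def mkQ (a b c d : ℚ) : ℍ[ℚ] := ⟨a, b, c, d⟩

/-- A rational quaternion is a Lipschitz quaternion if all its coefficients are
integers. -/
def IsLipschitz (α : ℍ[ℚ]) : Prop :=
  ∃ a b c d : ℤ, α = mkQ a b c d

/-- A rational quaternion is a Hurwitz quaternion if its coefficients are all in ℤ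
or all in ℤ + 1/2, i.e. 2α has integer coefficients of equal parity. -/
def IsHurwitz (α : ℍ[ℚ]) : Prop :=
  ∃ a b c d : ℤ, (2 : ℚ) • α = mkQ a b c d ∧
    a % 2 = b % 2 ∧ b % 2 = c % 2 ∧ c % 2 = d % 2

/-- A unit of the Hurwitz order: a Hurwitz quaternion of norm 1. -/
def IsHurwitzUnit (ε : ℍ[ℚ]) : Prop :=
  IsHurwitz ε ∧ Quaternion.normSq ε = 1

/-- A primary (Lipschitz) quaternion: a₁ odd, the other coefficients even, and the
sum of the coefficients ≡ 1 (mod 4). -/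
def Primary (α : ℍ[ℚ]) : Prop :=
  ∃ a b c d : ℤ, α = mkQ a b c d ∧ Odd a ∧ Even b ∧ Even c ∧ Even d ∧
    (a + b + c + d) % 4 = 1

/-
A Hurwitz unit either has integer coordinates, and then norm 1 forces it to be one of
±1, ±i, ±j, ±k, so both products with α are Lipschitz; or all its coordinates lie in
ℤ + 1/2. In the second case twice the real part of εα is e₁a₁ - e₂a_i - e₃a_j - e₄a_k with
e₁ odd, which is odd for primary α, so εα is not Lipschitz. Since Re(εα) = Re(αε), neither
is αε.
-/

open Quaternion

theorem Quaternion.re_mul_comm {R : Type*} [CommRing R] (a b : ℍ[R]) :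
    (a * b).re = (b * a).re := by
  simp only [re_mul]
  ring

@[simp] theorem mkQ_re (a b c d : ℚ) : (mkQ a b c d).re = a := rfl
@[simp] theorem mkQ_imI (a b c d : ℚ) : (mkQ a b c d).imI = b := rfl
@[simp] theorem mkQ_imJ (a b c d : ℚ) : (mkQ a b c d).imJ = c := rfl
@[simp] theorem mkQ_imK (a b c d : ℚ) : (mkQ a b c d).imK = d := rfl

theorem IsLipschitz.mul {x y : ℍ[ℚ]} (hx : IsLipschitz x) (hy : IsLipschitz y) :
    IsLipschitz (x * y) := by
  obtain ⟨a, b, c, d, rfl⟩ := hx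
  obtain ⟨e, f, g, h, rfl⟩ := hy
  refine ⟨a * e - b * f - c * g - d * h, a * f + b * e + c * h - d * g,
    a * g - b * h + c * e + d * f, a * h + b * g - c * f + d * e, ?_⟩
  ext <;> simp [re_mul, imI_mul, imJ_mul, imK_mul]

theorem IsLipschitz.even_of_two_mul_re_eq {q : ℍ[ℚ]} (hq : IsLipschitz q) {n : ℤ}
    (h : 2 * q.re = n) : Even n := by
  obtain ⟨a, b, c, d, rfl⟩ := hq
  have : (n : ℚ) = 2 * a := by simpa using h.symm
  have : n = 2 * a := by exact_mod_cast this
  exact ⟨a, by omega⟩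

def lipschitzUnits : Set ℍ[ℚ] :=
  {mkQ 1 0 0 0, mkQ (-1) 0 0 0, mkQ 0 1 0 0, mkQ 0 (-1) 0 0,
    mkQ 0 0 1 0, mkQ 0 0 (-1) 0, mkQ 0 0 0 1, mkQ 0 0 0 (-1)}

theorem isLipschitz_of_mem_lipschitzUnits {ε : ℍ[ℚ]} (h : ε ∈ lipschitzUnits) :
    IsLipschitz ε := by
  rcases h with rfl | rfl | rfl | rfl | rfl | rfl | rfl | rfl
  exacts [⟨1, 0, 0, 0, by simp⟩, ⟨-1, 0, 0, 0, by simp⟩, ⟨0, 1, 0, 0, by simp⟩,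
    ⟨0, -1, 0, 0, by simp⟩, ⟨0, 0, 1, 0, by simp⟩, ⟨0, 0, -1, 0, by simp⟩,
    ⟨0, 0, 0, 1, by simp⟩, ⟨0, 0, 0, -1, by simp⟩]

theorem IsLipschitz.mem_lipschitzUnits {ε : ℍ[ℚ]} (hε : IsLipschitz ε)
    (h1 : normSq ε = 1) : ε ∈ lipschitzUnits := by
  obtain ⟨a, b, c, d, rfl⟩ := hε
  have hsum : a ^ 2 + b ^ 2 + c ^ 2 + d ^ 2 = 1 := by
    rw [normSq_def', mkQ_re, mkQ_imI, mkQ_imJ, mkQ_imK] at h1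
    exact_mod_cast h1
  have bound : ∀ x : ℤ, x ^ 2 ≤ 1 → -1 ≤ x ∧ x ≤ 1 := fun x hx =>
    ⟨by nlinarith, by nlinarith⟩
  obtain ⟨ha₀, ha₁⟩ := bound a (by nlinarith [sq_nonneg b, sq_nonneg c, sq_nonneg d])
  obtain ⟨hb₀, hb₁⟩ := bound b (by nlinarith [sq_nonneg a, sq_nonneg c, sq_nonneg d])
  obtain ⟨hc₀, hc₁⟩ := bound c (by nlinarith [sq_nonneg a, sq_nonneg b, sq_nonneg d])
  obtain ⟨hd₀, hd₁⟩ := bound d (by nlinarith [sq_nonneg a, sq_nonneg b, sq_nonneg c])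
  interval_cases a <;> interval_cases b <;> interval_cases c <;> interval_cases d <;>
    simp_all [lipschitzUnits]

theorem IsHurwitz.isLipschitz_or_exists_odd {ε : ℍ[ℚ]} (hε : IsHurwitz ε) :
    IsLipschitz ε ∨ ∃ e₁ e₂ e₃ e₄ : ℤ, Odd e₁ ∧ (2 : ℚ) • ε = mkQ e₁ e₂ e₃ e₄ := by
  obtain ⟨a, b, c, d, h2, hab, hbc, hcd⟩ := hε
  rcases Int.emod_two_eq_zero_or_one a with ha | ha
  · left
    obtain ⟨a', rfl⟩ : 2 ∣ a := Int.dvd_of_emod_eq_zero ha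
    obtain ⟨b', rfl⟩ : 2 ∣ b := Int.dvd_of_emod_eq_zero (by omega)
    obtain ⟨c', rfl⟩ : 2 ∣ c := Int.dvd_of_emod_eq_zero (by omega)
    obtain ⟨d', rfl⟩ : 2 ∣ d := Int.dvd_of_emod_eq_zero (by omega)
    refine ⟨a', b', c', d', ?_⟩
    rw [show ε = (2 : ℚ)⁻¹ • ((2 : ℚ) • ε) by rw [smul_smul]; norm_num, h2]
    ext <;> simp
  · right
    exact ⟨a, b, c, d, Int.odd_iff.mpr ha, h2⟩

theorem Primary.not_isLipschitz_mul {α ε : ℍ[ℚ]} (hα : Primary α) {e₁ e₂ e₃ e₄ : ℤ}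
    (h₁ : Odd e₁) (hε : (2 : ℚ) • ε = mkQ e₁ e₂ e₃ e₄) :
    ¬ IsLipschitz (ε * α) ∧ ¬ IsLipschitz (α * ε) := by
  obtain ⟨a, b, c, d, rfl, ha, hb, hc, hd, -⟩ := hα
  have hre : 2 * (ε * mkQ a b c d).re = ((e₁ * a - e₂ * b - e₃ * c - e₄ * d : ℤ) : ℚ) := by
    rw [← smul_eq_mul, ← re_smul, ← smul_mul_assoc, hε]
    simp [re_mul]
  have hodd : ¬ Even (e₁ * a - e₂ * b - e₃ * c - e₄ * d) :=
    Int.not_even_iff_odd.mpr <|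
      (((h₁.mul ha).sub_even (hb.mul_left e₂)).sub_even (hc.mul_left e₃)).sub_even
        (hd.mul_left e₄)
  exact ⟨fun hL => hodd (hL.even_of_two_mul_re_eq hre),
    fun hL => hodd (hL.even_of_two_mul_re_eq (by rwa [re_mul_comm]))⟩

/-- for primary α and a Hurwitz unit ε, εα (equivalently αε) is a
Lipschitz quaternion iff ε ∈ {±1, ±i, ±j, ±k}. -/
theorem primary_mul_unit_lipschitz (α ε : ℍ[ℚ]) (hα : Primary α)
    (hε : IsHurwitzUnit ε) :
    (IsLipschitz (ε * α) ↔
        ε ∈ ({mkQ 1 0 0 0, mkQ (-1) 0 0 0, mkQ 0 1 0 0, mkQ 0 (-1) 0 0,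
          mkQ 0 0 1 0, mkQ 0 0 (-1) 0, mkQ 0 0 0 1, mkQ 0 0 0 (-1)} : Set ℍ[ℚ])) ∧
      (IsLipschitz (ε * α) ↔ IsLipschitz (α * ε)) := by
  change (_ ↔ ε ∈ lipschitzUnits) ∧ _
  obtain ⟨hHurwitz, hnorm⟩ := hε
  have hαL : IsLipschitz α := by
    obtain ⟨a, b, c, d, hαabcd, -⟩ := hα
    exact ⟨a, b, c, d, hαabcd⟩
  rcases hHurwitz.isLipschitz_or_exists_odd with hεL | ⟨e₁, e₂, e₃, e₄, h₁, h2ε⟩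
  · exact ⟨iff_of_true (hεL.mul hαL) (hεL.mem_lipschitzUnits hnorm),
      iff_of_true (hεL.mul hαL) (hαL.mul hεL)⟩
  · obtain ⟨hεα, hαε⟩ := hα.not_isLipschitz_mul h₁ h2ε
    have hεU : ε ∉ lipschitzUnits := fun h =>
      hεα ((isLipschitz_of_mem_lipschitzUnits h).mul hαL)
    exact ⟨iff_of_false hεα hεU, iff_of_false hεα hαε⟩
end
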